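/- Let B be a quaternion algebra over a field K of characteristic ≠ 2 and u ∈ B a nonzero element with Nrd(u) = 0. Let ℓ_u : B → B be left multiplication by u. Then the intersection of ker(ℓ_u) with the subspace B₀ of reduced-trace-zero elements is a one-dimensional K-subspace on which the reduced norm vanishes identically. -/

import Mathlib

open Quaternion

/-- The reduced trace of a quaternion: `Trd x = x + star x = 2 * x.re`. -/
def Trd {K : Type*} [Field K] {a b : K} (x : ℍ[K, a, b]) : K := 2 * x.re

/-- The reduced norm of a quaternion: the scalar `x * star x`. -/
def Nrd {K : Type*} [Field K] {a b : K} (x : ℍ[K, a, b]) : K := (x * star x).re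

/-- The subspace `B₀` of pure quaternions (reduced trace zero elements). -/
def pureQuaternions (K : Type*) [Field K] (a b : K) : Submodule K ℍ[K, a, b] where
  carrier := {x | Trd x = 0}
  add_mem' := by
    intro x y hx hy
    simp only [Set.mem_setOf_eq, Trd] at *
    change 2 * (x.re + y.re) = 0
    linear_combination hx + hy
  zero_mem' := by simp [Trd]
  smul_mem' := by
    intro c x hx
    simp only [Set.mem_setOf_eq, Trd] at *
    change 2 * (c • x.re) = 0
    rw [smul_eq_mul, mul_left_comm, hx, mul_zero]

private lemma minor_aux {K : Type*} [Field K] {uc ui uj xc xi xj yc yi yj : K} (huc : uc ≠ 0)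
    (h1 : xi * uc = xc * ui) (h2 : xj * uc = xc * uj)
    (h3 : yi * uc = yc * ui) (h4 : yj * uc = yc * uj) : xi * yj = xj * yi := by
  have h : uc ^ 2 * (xi * yj) = uc ^ 2 * (xj * yi) := by
    linear_combination (uc * yj) * h1 + (xc * ui) * h4 - (uc * yi) * h2 - (xc * uj) * h3
  exact mul_left_cancel₀ (pow_ne_zero 2 huc) h

private lemma prop_of_minors {K : Type*} [Field K] {v1 v2 v3 x1 x2 x3 : K}
    (hv : v1 ≠ 0 ∨ v2 ≠ 0 ∨ v3 ≠ 0)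
    (h12 : x1 * v2 = x2 * v1) (h13 : x1 * v3 = x3 * v1) (h23 : x2 * v3 = x3 * v2) :
    ∃ c : K, x1 = c * v1 ∧ x2 = c * v2 ∧ x3 = c * v3 := by
  rcases hv with hv | hv | hv
  · refine ⟨x1 / v1, ?_, ?_, ?_⟩
    · rw [div_mul_eq_mul_div, eq_div_iff hv]
    · rw [div_mul_eq_mul_div, eq_div_iff hv]; linear_combination -h12
    · rw [div_mul_eq_mul_div, eq_div_iff hv]; linear_combination -h13
  · refine ⟨x2 / v2, ?_, ?_, ?_⟩
    · rw [div_mul_eq_mul_div, eq_div_iff hv]; linear_combination h12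
    · rw [div_mul_eq_mul_div, eq_div_iff hv]
    · rw [div_mul_eq_mul_div, eq_div_iff hv]; linear_combination -h23
  · refine ⟨x3 / v3, ?_, ?_, ?_⟩
    · rw [div_mul_eq_mul_div, eq_div_iff hv]; linear_combination h13
    · rw [div_mul_eq_mul_div, eq_div_iff hv]; linear_combination h23
    · rw [div_mul_eq_mul_div, eq_div_iff hv]

private lemma key {K : Type*} [Field K] (hchar : (2 : K) ≠ 0) {a b u0 u1 u2 u3 : K}
    (ha : a ≠ 0) (hb : b ≠ 0)
    (hu : ¬(u0 = 0 ∧ u1 = 0 ∧ u2 = 0 ∧ u3 = 0))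
    (hN : u0^2 - a*u1^2 - b*u2^2 + a*b*u3^2 = 0) :
    ∃ v1 v2 v3 : K, (v1 ≠ 0 ∨ v2 ≠ 0 ∨ v3 ≠ 0) ∧
      (a*u1*v1 + b*u2*v2 - a*b*u3*v3 = 0) ∧
      (u0*v1 + b*u3*v2 - b*u2*v3 = 0) ∧
      (-(a*u3*v1) + u0*v2 + a*u1*v3 = 0) ∧
      (-(u2*v1) + u1*v2 + u0*v3 = 0) ∧
      ∀ x1 x2 x3 : K,
        (a*u1*x1 + b*u2*x2 - a*b*u3*x3 = 0) →
        (u0*x1 + b*u3*x2 - b*u2*x3 = 0) →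
        (-(a*u3*x1) + u0*x2 + a*u1*x3 = 0) →
        (-(u2*x1) + u1*x2 + u0*x3 = 0) →
        ∃ c : K, x1 = c*v1 ∧ x2 = c*v2 ∧ x3 = c*v3 := by
  -- any two solutions of the linear system have vanishing 2×2 minors
  have minors : ∀ x1 x2 x3 y1 y2 y3 : K,
      (a*u1*x1 + b*u2*x2 - a*b*u3*x3 = 0) →
      (u0*x1 + b*u3*x2 - b*u2*x3 = 0) →
      (-(a*u3*x1) + u0*x2 + a*u1*x3 = 0) →
      (-(u2*x1) + u1*x2 + u0*x3 = 0) →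
      (a*u1*y1 + b*u2*y2 - a*b*u3*y3 = 0) →
      (u0*y1 + b*u3*y2 - b*u2*y3 = 0) →
      (-(a*u3*y1) + u0*y2 + a*u1*y3 = 0) →
      (-(u2*y1) + u1*y2 + u0*y3 = 0) →
      x1*y2 = x2*y1 ∧ x1*y3 = x3*y1 ∧ x2*y3 = x3*y2 := by
    intro x1 x2 x3 y1 y2 y3 ex0 ex1 ex2 ex3 ey0 ey1 ey2 ey3
    rcases eq_or_ne u0 0 with h0 | h0
    · -- u0 = 0 : both solutions are proportional to (u1, u2, u3)
      have p12 : x1*u2 = x2*u1 := by linear_combination -ex3 + x3*h0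
      have p13 : x1*u3 = x3*u1 := by
        have h : a*(x1*u3) = a*(x3*u1) := by linear_combination -ex2 + x2*h0
        exact mul_left_cancel₀ ha h
      have p23 : x2*u3 = x3*u2 := by
        have h : b*(x2*u3) = b*(x3*u2) := by linear_combination ex1 - x1*h0
        exact mul_left_cancel₀ hb h
      have q12 : y1*u2 = y2*u1 := by linear_combination -ey3 + y3*h0
      have q13 : y1*u3 = y3*u1 := by
        have h : a*(y1*u3) = a*(y3*u1) := by linear_combination -ey2 + y2*h0
        exact mul_left_cancel₀ ha h
      have q23 : y2*u3 = y3*u2 := by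
        have h : b*(y2*u3) = b*(y3*u2) := by linear_combination ey1 - y1*h0
        exact mul_left_cancel₀ hb h
      by_cases h1 : u1 = 0
      · by_cases h2 : u2 = 0
        · by_cases h3 : u3 = 0
          · exact absurd ⟨h0, h1, h2, h3⟩ hu
          · exact ⟨minor_aux h3 p13 p23 q13 q23,
              minor_aux h3 p13 rfl q13 rfl,
              minor_aux h3 p23 rfl q23 rfl⟩
        · exact ⟨minor_aux h2 p12 rfl q12 rfl,
            minor_aux h2 p12 p23.symm q12 q23.symm,
            minor_aux h2 rfl p23.symm rfl q23.symm⟩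
      · exact ⟨minor_aux h1 rfl p12.symm rfl q12.symm,
          minor_aux h1 rfl p13.symm rfl q13.symm,
          minor_aux h1 p12.symm p13.symm q12.symm q13.symm⟩
    · -- u0 ≠ 0 : use explicit linear-combination certificates
      have h2u0 : (2:K) * u0 ≠ 0 := mul_ne_zero hchar h0
      have h2u0sq : (2:K) * u0^2 ≠ 0 := mul_ne_zero hchar (pow_ne_zero 2 h0)
      refine ⟨mul_left_cancel₀ h2u0 ?_, mul_left_cancel₀ h2u0sq ?_,
        mul_left_cancel₀ h2u0sq ?_⟩
      · linear_combination (-y3)*ex0 + y2*ex1 + (-y1)*ex2 +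
          x3*ey0 + (-x2)*ey1 + x1*ey2
      · linear_combination (-(u1*y3))*ex0 + (-(u1*y2) + 2*u0*y3)*ex1 +
          (u1*y1 - 2*b*u3*y3)*ex2 + (-(2*u0*y1) + 2*b*u2*y3)*ex3 +
          (2*u3*x1 - u1*x3)*ey0 + (-(2*u2*x1) + u1*x2)*ey1 +
          (u1*x1)*ey2
      · linear_combination (-(u2*y3))*ex0 + (-(u2*y2) + 2*a*u3*y3)*ex1 +
          (u2*y1 + 2*u0*y3)*ex2 + (-(2*u0*y2) - 2*a*u1*y3)*ex3 +
          (2*u3*x2 - u2*x3)*ey0 + (-(u2*x2))*ey1 +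
          (-(u2*x1) + 2*u1*x2)*ey2
  have main : ∀ v1 v2 v3 : K, (v1 ≠ 0 ∨ v2 ≠ 0 ∨ v3 ≠ 0) →
      (a*u1*v1 + b*u2*v2 - a*b*u3*v3 = 0) →
      (u0*v1 + b*u3*v2 - b*u2*v3 = 0) →
      (-(a*u3*v1) + u0*v2 + a*u1*v3 = 0) →
      (-(u2*v1) + u1*v2 + u0*v3 = 0) →
      ∀ x1 x2 x3 : K,
        (a*u1*x1 + b*u2*x2 - a*b*u3*x3 = 0) →
        (u0*x1 + b*u3*x2 - b*u2*x3 = 0) →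
        (-(a*u3*x1) + u0*x2 + a*u1*x3 = 0) →
        (-(u2*x1) + u1*x2 + u0*x3 = 0) →
        ∃ c : K, x1 = c*v1 ∧ x2 = c*v2 ∧ x3 = c*v3 := by
    intro v1 v2 v3 hv e0 e1 e2 e3 x1 x2 x3 f0 f1 f2 f3
    obtain ⟨m12, m13, m23⟩ := minors x1 x2 x3 v1 v2 v3 f0 f1 f2 f3 e0 e1 e2 e3
    exact prop_of_minors hv m12 m13 m23
  by_cases h1 : u0^2 - a*u1^2 = 0
  · by_cases h2 : b*u2^2 - u0^2 = 0
    · by_cases h3 : a*u1^2 + b*u2^2 = 0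
      · -- impossible: all three candidate components vanish
        exfalso
        have hu0 : u0 = 0 := by
          have h : (2:K) * u0^2 = 0 := by linear_combination h1 - h2 + h3
          have h' : u0^2 = 0 := by
            rcases mul_eq_zero.mp h with h' | h'
            · exact absurd h' hchar
            · exact h'
          exact pow_eq_zero_iff (two_ne_zero) |>.mp h'
        have hu1 : u1 = 0 := by
          have h : a * (u1*u1) = 0 := by linear_combination -h1 + u0*hu0
          rcases mul_eq_zero.mp h with h' | h'
          · exact absurd h' ha
          · exact (mul_self_eq_zero).mp h'
        have hu2 : u2 = 0 := by
          have h : b * (u2*u2) = 0 := by linear_combination h2 + u0*hu0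
          rcases mul_eq_zero.mp h with h' | h'
          · exact absurd h' hb
          · exact (mul_self_eq_zero).mp h'
        have hu3 : u3 = 0 := by
          have h : a * (b * (u3*u3)) = 0 := by
            linear_combination hN - u0*hu0 + a*u1*hu1 + b*u2*hu2
          rcases mul_eq_zero.mp h with h' | h'
          · exact absurd h' ha
          · rcases mul_eq_zero.mp h' with h'' | h''
            · exact absurd h'' hb
            · exact (mul_self_eq_zero).mp h''
        exact hu ⟨hu0, hu1, hu2, hu3⟩
      · -- candidate v₃
        have e0 : a*u1*(b*u0*u2 + a*b*u1*u3) + b*u2*(a*b*u2*u3 - a*u0*u1) -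
            a*b*u3*(a*u1^2 + b*u2^2) = 0 := by ring
        have e1 : u0*(b*u0*u2 + a*b*u1*u3) + b*u3*(a*b*u2*u3 - a*u0*u1) -
            b*u2*(a*u1^2 + b*u2^2) = 0 := by linear_combination (b*u2)*hN
        have e2 : -(a*u3*(b*u0*u2 + a*b*u1*u3)) + u0*(a*b*u2*u3 - a*u0*u1) +
            a*u1*(a*u1^2 + b*u2^2) = 0 := by linear_combination (-(a*u1))*hN
        have e3 : -(u2*(b*u0*u2 + a*b*u1*u3)) + u1*(a*b*u2*u3 - a*u0*u1) +
            u0*(a*u1^2 + b*u2^2) = 0 := by ring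
        exact ⟨_, _, _, Or.inr (Or.inr h3), e0, e1, e2, e3,
          main _ _ _ (Or.inr (Or.inr h3)) e0 e1 e2 e3⟩
    · -- candidate v₂
      have e0 : a*u1*(b*(u1*u2 + u0*u3)) + b*u2*(b*u2^2 - u0^2) -
          a*b*u3*(u0*u1 + b*u2*u3) = 0 := by linear_combination (-(b*u2))*hN
      have e1 : u0*(b*(u1*u2 + u0*u3)) + b*u3*(b*u2^2 - u0^2) -
          b*u2*(u0*u1 + b*u2*u3) = 0 := by ring
      have e2 : -(a*u3*(b*(u1*u2 + u0*u3))) + u0*(b*u2^2 - u0^2) +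
          a*u1*(u0*u1 + b*u2*u3) = 0 := by linear_combination (-u0)*hN
      have e3 : -(u2*(b*(u1*u2 + u0*u3))) + u1*(b*u2^2 - u0^2) +
          u0*(u0*u1 + b*u2*u3) = 0 := by ring
      exact ⟨_, _, _, Or.inr (Or.inl h2), e0, e1, e2, e3,
        main _ _ _ (Or.inr (Or.inl h2)) e0 e1 e2 e3⟩
  · -- candidate v₁
    have e0 : a*u1*(u0^2 - a*u1^2) + b*u2*(a*(u0*u3 - u1*u2)) -
        a*b*u3*(u0*u2 - a*u1*u3) = 0 := by linear_combination (a*u1)*hN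
    have e1 : u0*(u0^2 - a*u1^2) + b*u3*(a*(u0*u3 - u1*u2)) -
        b*u2*(u0*u2 - a*u1*u3) = 0 := by linear_combination u0*hN
    have e2 : -(a*u3*(u0^2 - a*u1^2)) + u0*(a*(u0*u3 - u1*u2)) +
        a*u1*(u0*u2 - a*u1*u3) = 0 := by ring
    have e3 : -(u2*(u0^2 - a*u1^2)) + u1*(a*(u0*u3 - u1*u2)) +
        u0*(u0*u2 - a*u1*u3) = 0 := by ring
    exact ⟨_, _, _, Or.inl h1, e0, e1, e2, e3, main _ _ _ (Or.inl h1) e0 e1 e2 e3⟩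

/-- If `u ≠ 0` is isotropic (`Nrd u = 0`) in a quaternion algebra over a
field of characteristic `≠ 2`, then `ker(ℓ_u) ∩ B₀` is a one-dimensional subspace on which
the reduced norm vanishes identically. -/
theorem ker_leftMul_inf_pure_is_isotropic_line {K : Type*} [Field K] (hchar : (2 : K) ≠ 0)
    (a b : K) (ha : a ≠ 0) (hb : b ≠ 0) (u : ℍ[K, a, b]) (hu : u ≠ 0) (hiso : Nrd u = 0) :
    Module.finrank K
        ↥(LinearMap.ker (LinearMap.mulLeft K u) ⊓ pureQuaternions K a b) = 1 ∧
      ∀ x ∈ LinearMap.ker (LinearMap.mulLeft K u) ⊓ pureQuaternions K a b, Nrd x = 0 := by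
  have hmem : ∀ x : ℍ[K, a, b],
      x ∈ LinearMap.ker (LinearMap.mulLeft K u) ⊓ pureQuaternions K a b ↔
        (u * x = 0 ∧ x.re = 0) := by
    intro x
    have hpure : x ∈ pureQuaternions K a b ↔ 2 * x.re = 0 := Iff.rfl
    rw [Submodule.mem_inf, LinearMap.mem_ker, LinearMap.mulLeft_apply, hpure]
    exact and_congr_right fun _ =>
      ⟨fun hp => (mul_eq_zero.mp hp).resolve_left hchar, fun hp => by rw [hp, mul_zero]⟩
  have hN : u.re^2 - a*u.imI^2 - b*u.imJ^2 + a*b*u.imK^2 = 0 := by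
    have h := hiso
    simp only [Nrd, QuaternionAlgebra.re_mul, QuaternionAlgebra.re_star,
      QuaternionAlgebra.imI_star, QuaternionAlgebra.imJ_star, QuaternionAlgebra.imK_star] at h
    linear_combination h
  have hu4 : ¬(u.re = 0 ∧ u.imI = 0 ∧ u.imJ = 0 ∧ u.imK = 0) := by
    rintro ⟨h0, h1, h2, h3⟩
    exact hu (QuaternionAlgebra.ext h0 h1 h2 h3)
  obtain ⟨v1, v2, v3, hv, e0, e1, e2, e3, hspan⟩ := key hchar ha hb hu4 hN
  have hvmem : (⟨0, v1, v2, v3⟩ : ℍ[K, a, b]) ∈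
      LinearMap.ker (LinearMap.mulLeft K u) ⊓ pureQuaternions K a b := by
    rw [hmem]
    constructor
    · ext
      · show _ = (0:K); rw [QuaternionAlgebra.re_mul]; dsimp only
        linear_combination e0
      · show _ = (0:K); rw [QuaternionAlgebra.imI_mul]; dsimp only
        linear_combination e1
      · show _ = (0:K); rw [QuaternionAlgebra.imJ_mul]; dsimp only
        linear_combination e2
      · show _ = (0:K); rw [QuaternionAlgebra.imK_mul]; dsimp only
        linear_combination e3
    · rfl
  have hvne : (⟨0, v1, v2, v3⟩ : ℍ[K, a, b]) ≠ 0 := by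
    intro h
    rcases hv with h1 | h1 | h1
    · exact h1 (congrArg QuaternionAlgebra.imI h)
    · exact h1 (congrArg QuaternionAlgebra.imJ h)
    · exact h1 (congrArg QuaternionAlgebra.imK h)
  have hSeq : LinearMap.ker (LinearMap.mulLeft K u) ⊓ pureQuaternions K a b =
      Submodule.span K {(⟨0, v1, v2, v3⟩ : ℍ[K, a, b])} := by
    apply le_antisymm
    · intro x hx
      rw [hmem] at hx
      obtain ⟨hux, hxre⟩ := hx
      have c0 : (u * x).re = 0 := by rw [hux]; rfl
      have c1 : (u * x).imI = 0 := by rw [hux]; rfl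
      have c2 : (u * x).imJ = 0 := by rw [hux]; rfl
      have c3 : (u * x).imK = 0 := by rw [hux]; rfl
      rw [QuaternionAlgebra.re_mul] at c0
      rw [QuaternionAlgebra.imI_mul] at c1
      rw [QuaternionAlgebra.imJ_mul] at c2
      rw [QuaternionAlgebra.imK_mul] at c3
      have f0 : a*u.imI*x.imI + b*u.imJ*x.imJ - a*b*u.imK*x.imK = 0 := by
        linear_combination c0 - u.re * hxre
      have f1 : u.re*x.imI + b*u.imK*x.imJ - b*u.imJ*x.imK = 0 := by
        linear_combination c1 - u.imI * hxre
      have f2 : -(a*u.imK*x.imI) + u.re*x.imJ + a*u.imI*x.imK = 0 := by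
        linear_combination c2 - u.imJ * hxre
      have f3 : -(u.imJ*x.imI) + u.imI*x.imJ + u.re*x.imK = 0 := by
        linear_combination c3 - u.imK * hxre
      obtain ⟨c, hc1, hc2, hc3⟩ := hspan x.imI x.imJ x.imK f0 f1 f2 f3
      rw [Submodule.mem_span_singleton]
      refine ⟨c, ?_⟩
      ext
      · show c • (0 : K) = x.re
        rw [smul_eq_mul, mul_zero, hxre]
      · show c • v1 = x.imI
        rw [smul_eq_mul]; exact hc1.symm
      · show c • v2 = x.imJ
        rw [smul_eq_mul]; exact hc2.symm
      · show c • v3 = x.imK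
        rw [smul_eq_mul]; exact hc3.symm
    · rw [Submodule.span_le, Set.singleton_subset_iff]
      exact hvmem
  constructor
  · rw [hSeq]
    exact finrank_span_singleton hvne
  · intro x hx
    rw [hmem] at hx
    obtain ⟨hux, hxre⟩ := hx
    have hstar : x * star x = (Nrd x : K) • (1 : ℍ[K, a, b]) := by
      ext
      · show (x * star x).re = Nrd x • (1 : K)
        rw [smul_eq_mul, mul_one]; rfl
      · show (x * star x).imI = Nrd x • (0 : K)
        rw [smul_eq_mul, mul_zero, QuaternionAlgebra.imI_mul]
        simp only [QuaternionAlgebra.re_star, QuaternionAlgebra.imI_star,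
          QuaternionAlgebra.imJ_star, QuaternionAlgebra.imK_star]
        ring
      · show (x * star x).imJ = Nrd x • (0 : K)
        rw [smul_eq_mul, mul_zero, QuaternionAlgebra.imJ_mul]
        simp only [QuaternionAlgebra.re_star, QuaternionAlgebra.imI_star,
          QuaternionAlgebra.imJ_star, QuaternionAlgebra.imK_star]
        ring
      · show (x * star x).imK = Nrd x • (0 : K)
        rw [smul_eq_mul, mul_zero, QuaternionAlgebra.imK_mul]
        simp only [QuaternionAlgebra.re_star, QuaternionAlgebra.imI_star,
          QuaternionAlgebra.imJ_star, QuaternionAlgebra.imK_star]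
        ring
    have hz : Nrd x • u = 0 := by
      have h1 : u * (x * star x) = 0 := by rw [← mul_assoc, hux, zero_mul]
      rwa [hstar, mul_smul_comm, mul_one] at h1
    rcases smul_eq_zero.mp hz with h | h
    · exact h
    · exact absurd h hu
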